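/- Let V be a finite nonempty type, w : V → V → ℕ∞, q : ℕ, and let w_q be the augmented graph on V ⊕ Bool. Then: (a) for all u, v : V, dist_{w_q}(inl u, inl v) = min(dist_w(u,v), 2q); (b) for all v : V and b : Bool, dist_{w_q}(inl v, inr b) = q and dist_{w_q}(inr b, inl v) = q; (c) for b ≠ b', dist_{w_q}(inr b, inr b') = 2q. -/

import Mathlib

/-!
The claimed distance table `augDist` vanishes on the diagonal and no edge of the augmented
graph decreases it (`augDist s t ≤ aug s x + augDist x t`), so it bounds every walk weight, hence the
distances, from below. Conversely, walks of the original graph embed into the augmented one,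
and walks of one or two edges through a hub `inr b` (or, between hubs, through any original
vertex) realise the values `q` and `2q`.
-/

/-- Weight of a walk starting at `u` and visiting the vertices of `p` in order. -/
def walkWeight {V : Type*} (w : V → V → ℕ∞) : V → List V → ℕ∞
  | _, [] => 0
  | u, x :: xs => w u x + walkWeight w x xs

/-- Shortest-path distance: infimum of weights of walks from `u` to `v`. -/
noncomputable def gdist {V : Type*} (w : V → V → ℕ∞) (u v : V) : ℕ∞ :=
  ⨅ (p : List V) (_ : (u :: p).getLast (List.cons_ne_nil u p) = v), walkWeight w u p

/-- Eccentricity of a vertex. -/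
noncomputable def ecc {V : Type*} (w : V → V → ℕ∞) (v : V) : ℕ∞ :=
  ⨆ u, gdist w v u

/-- Radius. -/
noncomputable def rad {V : Type*} (w : V → V → ℕ∞) : ℕ∞ :=
  ⨅ v, ecc w v

/-- Diameter. -/
noncomputable def diam {V : Type*} (w : V → V → ℕ∞) : ℕ∞ :=
  ⨆ v, ecc w v

/-- Augmented graph on `V ⊕ Bool`: two extra vertices `x = inr false`, `y = inr true`
connected to every original vertex (in both directions) by edges of weight `q`. -/
def aug {V : Type*} (w : V → V → ℕ∞) (q : ℕ) : V ⊕ Bool → V ⊕ Bool → ℕ∞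
  | Sum.inl u, Sum.inl v => w u v
  | Sum.inl _, Sum.inr _ => (q : ℕ∞)
  | Sum.inr _, Sum.inl _ => (q : ℕ∞)
  | Sum.inr _, Sum.inr _ => ⊤

section gdist

variable {V : Type*} (w : V → V → ℕ∞)

lemma gdist_le_walkWeight {u v : V} (p : List V)
    (hp : (u :: p).getLast (List.cons_ne_nil u p) = v) :
    gdist w u v ≤ walkWeight w u p :=
  iInf₂_le p hp

lemma gdist_self (v : V) : gdist w v v = 0 :=
  nonpos_iff_eq_zero.1 (gdist_le_walkWeight w [] rfl)

lemma gdist_le_weight (u v : V) : gdist w u v ≤ w u v := by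
  simpa [walkWeight] using gdist_le_walkWeight w [v] rfl

lemma gdist_le_weight_add_gdist (u x v : V) : gdist w u v ≤ w u x + gdist w x v := by
  conv_rhs => rw [gdist, ENat.add_iInf₂]
  exact le_iInf₂ fun p hp => gdist_le_walkWeight w (x :: p) (by simpa using hp)

lemma le_gdist_of_le_weight_add {d : V → V → ℕ∞} (hd_self : ∀ v, d v v = 0)
    (hd : ∀ u x v, d u v ≤ w u x + d x v) (u v : V) : d u v ≤ gdist w u v := by
  refine le_iInf₂ fun p hp => ?_
  induction p generalizing u with
  | nil =>
    obtain rfl : u = v := hp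
    simp [hd_self]
  | cons x xs ih =>
    exact (hd u x v).trans (add_le_add le_rfl (ih x (by simpa using hp)))

lemma walkWeight_map_le {W : Type*} {w' : W → W → ℕ∞} (f : V → W)
    (hf : ∀ a b, w' (f a) (f b) ≤ w a b) (u : V) (p : List V) :
    walkWeight w' (f u) (p.map f) ≤ walkWeight w u p := by
  induction p generalizing u with
  | nil => exact le_rfl
  | cons x xs ih => exact add_le_add (hf u x) (ih x)

lemma gdist_map_le {W : Type*} {w' : W → W → ℕ∞} (f : V → W)
    (hf : ∀ a b, w' (f a) (f b) ≤ w a b) (u v : V) :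
    gdist w' (f u) (f v) ≤ gdist w u v := by
  refine le_iInf₂ fun p hp => (gdist_le_walkWeight w' (p.map f) ?_).trans
    (walkWeight_map_le w f hf u p)
  simp only [← List.map_cons, List.getLast_map, hp]

end gdist

section aug

variable {V : Type*} (w : V → V → ℕ∞) (q : ℕ)

noncomputable def augDist : V ⊕ Bool → V ⊕ Bool → ℕ∞
  | .inl u, .inl v => min (gdist w u v) ((2 * q : ℕ) : ℕ∞)
  | .inl _, .inr _ => q
  | .inr _, .inl _ => q
  | .inr b, .inr b' => if b = b' then 0 else ((2 * q : ℕ) : ℕ∞)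

lemma cast_two_mul_eq_add : ((2 * q : ℕ) : ℕ∞) = q + q := by
  push_cast; ring

lemma augDist_self (s : V ⊕ Bool) : augDist w q s s = 0 := by
  cases s <;> simp [augDist, gdist_self]

lemma augDist_le_aug_add (s x t : V ⊕ Bool) :
    augDist w q s t ≤ aug w q s x + augDist w q x t := by
  rcases s with u | b <;> rcases x with x | c <;> rcases t with v | b'
  · rw [augDist, augDist, aug, ← min_add_add_left]
    exact min_le_min (gdist_le_weight_add_gdist w u x v) le_add_self
  · exact le_add_self
  · exact (min_le_right _ _).trans (cast_two_mul_eq_add q).le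
  · exact le_self_add
  · exact le_self_add
  · simp only [augDist, aug]
    split_ifs
    · exact zero_le
    · exact (cast_two_mul_eq_add q).le
  all_goals simp [aug]

lemma gdist_aug_le_augDist [Nonempty V] (s t : V ⊕ Bool) :
    gdist (aug w q) s t ≤ augDist w q s t := by
  have two_step_le (s x t : V ⊕ Bool) (hs : aug w q s x = q) (ht : aug w q x t = q) :
      gdist (aug w q) s t ≤ ((2 * q : ℕ) : ℕ∞) := by
    calc gdist (aug w q) s t ≤ aug w q s x + aug w q x t :=
          (gdist_le_weight_add_gdist _ s x t).trans (add_le_add le_rfl (gdist_le_weight _ x t))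
      _ = _ := by rw [hs, ht, cast_two_mul_eq_add]
  rcases s with u | b <;> rcases t with v | b'
  · exact le_min (gdist_map_le w Sum.inl (fun _ _ => le_rfl) u v)
      (two_step_le _ (.inr false) _ rfl rfl)
  · exact gdist_le_weight _ _ _
  · exact gdist_le_weight _ _ _
  · simp only [augDist]
    split_ifs with h
    · rw [h, gdist_self]
    · exact two_step_le _ (.inl (Classical.arbitrary V)) _ rfl rfl

theorem gdist_aug [Nonempty V] : gdist (aug w q) = augDist w q :=
  funext₂ fun s t => le_antisymm (gdist_aug_le_augDist w q s t)
    (le_gdist_of_le_weight_add _ (augDist_self w q) (augDist_le_aug_add w q) s t)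

end aug

theorem stmt1 {V : Type*} [Nonempty V] (w : V → V → ℕ∞) (q : ℕ) :
    (∀ u v : V,
      gdist (aug w q) (Sum.inl u) (Sum.inl v) = min (gdist w u v) ((2 * q : ℕ) : ℕ∞)) ∧
    (∀ (v : V) (b : Bool),
      gdist (aug w q) (Sum.inl v) (Sum.inr b) = (q : ℕ∞) ∧
      gdist (aug w q) (Sum.inr b) (Sum.inl v) = (q : ℕ∞)) ∧
    (∀ b b' : Bool, b ≠ b' →
      gdist (aug w q) (Sum.inr b) (Sum.inr b') = ((2 * q : ℕ) : ℕ∞)) := by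
  rw [gdist_aug]
  exact ⟨fun _ _ => rfl, fun _ _ => ⟨rfl, rfl⟩, fun _ _ h => if_neg h⟩
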